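/- arXiv:2309.02756 — 5 statements merged into one kernel-verified Lean document; each statement's English description precedes it below -/
import Mathlib

section
/- Given a PES E = (E, <, #, l, ∅) and any subset F ⊆ E, the structure φ(E, F) = (E, <, #, l, F, ≺, ▷, ∅), where e ≺ e̲ for each e ∈ F, and e ▷ e̲' for all e ∈ E and e' ∈ F with e' < e, is a causal (hence cause-respecting) RPES. -/
/-!
`φ(E, F)` is causal by construction, and in a causal RPES sustained causation `≪` coincides
with causality `<`. Hence the RPES axioms about `≪` are the PES axioms about `<`, and
cause-respect is automatic. The causes of an event are conflict-free because a conflict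
between two of them would be inherited by the event itself.
-/

/-- Data of a (labeled) reversible prime event structure (RPES) over actions `L`:
a carrier set of events, causality `lt`, conflict `conf`, labeling, a set `F` of
reversible events, reverse causality `rc` (`rc e u` means `e ≺ u̲`), prevention
`prev` (`prev e u` means `e ▷ u̲`), and an initial configuration `C0`. -/
structure RPESData (E : Type) (L : Type) where
  carrier : Set E
  lt : E → E → Prop
  conf : E → E → Prop
  label : E → L
  F : Set E
  rc : E → E → Prop
  prev : E → E → Prop
  C0 : Set E

/-- Data of a (labeled) prime event structure (PES) with empty initial configuration. -/
structure PESData (E : Type) (L : Type) where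
  carrier : Set E
  lt : E → E → Prop
  conf : E → E → Prop
  label : E → L

namespace RPESData

variable {E : Type} {L : Type}

/-- A set of events is conflict-free. -/
def ConflictFree (R : RPESData E L) (X : Set E) : Prop :=
  ∀ e ∈ X, ∀ e' ∈ X, ¬ R.conf e e'

/-- Sustained causation: `a ≪ b` iff `a < b` and, if `a` is reversible, `b ▷ a̲`. -/
def SC (R : RPESData E L) (a b : E) : Prop :=
  R.lt a b ∧ (a ∈ R.F → R.prev b a)

/-- The axioms of a reversible prime event structure. -/
structure IsRPES (R : RPESData E L) : Prop where
  countable : R.carrier.Countable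
  lt_carrier : ∀ a b, R.lt a b → a ∈ R.carrier ∧ b ∈ R.carrier
  conf_carrier : ∀ a b, R.conf a b → a ∈ R.carrier ∧ b ∈ R.carrier
  conf_irrefl : ∀ a, ¬ R.conf a a
  conf_symm : ∀ a b, R.conf a b → R.conf b a
  lt_irrefl : ∀ a, ¬ R.lt a a
  lt_trans : ∀ a b c, R.lt a b → R.lt b c → R.lt a c
  causes_finite : ∀ e, {e' | R.lt e' e}.Finite
  causes_cf : ∀ e, R.ConflictFree {e' | R.lt e' e}
  F_carrier : R.F ⊆ R.carrier
  rc_carrier : ∀ a b, R.rc a b → a ∈ R.carrier ∧ b ∈ R.F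
  rc_refl : ∀ u ∈ R.F, R.rc u u
  rcauses_finite : ∀ u ∈ R.F, {e | R.rc e u}.Finite
  rcauses_cf : ∀ u ∈ R.F, R.ConflictFree {e | R.rc e u}
  prev_carrier : ∀ a b, R.prev a b → a ∈ R.carrier ∧ b ∈ R.F
  prev_rc_disjoint : ∀ a b, ¬ (R.prev a b ∧ R.rc a b)
  sc_trans : ∀ a b c, R.SC a b → R.SC b c → R.SC a c
  conf_hered_sc : ∀ a b c, R.conf a b → R.SC b c → R.conf a c
  C0_carrier : R.C0 ⊆ R.carrier
  C0_finite : R.C0.Finite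
  C0_closed : ∀ e ∈ R.C0, ∀ e', R.lt e' e → e' ∈ R.C0
  C0_cf : R.ConflictFree R.C0

/-- A cause-respecting RPES: causality is sustained causation. -/
def CauseRespecting (R : RPESData E L) : Prop :=
  ∀ a b, R.lt a b → R.SC a b

/-- A causal RPES. -/
def Causal (R : RPESData E L) : Prop :=
  (∀ e, ∀ u ∈ R.F, (R.rc e u ↔ e = u)) ∧
  (∀ e, ∀ u ∈ R.F, (R.prev e u ↔ R.lt u e))

/-- The mixed step `A ∪ B̲` is enabled at configuration `C`. -/
def Enabled (R : RPESData E L) (C A B : Set E) : Prop :=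
  A.Finite ∧ B.Finite ∧ A ⊆ R.carrier ∧ B ⊆ R.F ∧
  A ∩ C = ∅ ∧ B ⊆ C ∧ R.ConflictFree (C ∪ A) ∧
  (∀ e ∈ A, ∀ e', R.lt e' e → e' ∈ C \ B) ∧
  (∀ e ∈ B, ∀ e', R.rc e' e → e' ∈ C \ (B \ {e})) ∧
  (∀ e ∈ B, ∀ e', R.prev e' e → e' ∉ C ∪ A)

/-- `IsTraceFrom R C t C'`: the sequence of mixed steps `t` can be executed
starting at `C`, ending in `C'`. -/
def IsTraceFrom (R : RPESData E L) : Set E → List (Set E × Set E) → Set E → Prop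
  | C, [], C' => C' = C
  | C, p :: t, C' => R.Enabled C p.1 p.2 ∧ R.IsTraceFrom ((C \ p.2) ∪ p.1) t C'

/-- `t` is a trace of `R` with `last(t) = C`. -/
def IsTraceTo (R : RPESData E L) (t : List (Set E × Set E)) (C : Set E) : Prop :=
  R.IsTraceFrom R.C0 t C

/-- `t` is a trace of `R`. -/
def IsTrace (R : RPESData E L) (t : List (Set E × Set E)) : Prop :=
  ∃ C, R.IsTraceTo t C

/-- Reachable configurations: obtained from `C0` by mixed steps. -/
inductive ReachConf (R : RPESData E L) : Set E → Prop
  | init : ReachConf R R.C0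
  | step : ∀ C A B, ReachConf R C → R.Enabled C A B → ReachConf R ((C \ B) ∪ A)

/-- Forwards reachable configurations: obtained from `C0` by forward steps only. -/
inductive FwdReachConf (R : RPESData E L) : Set E → Prop
  | init : FwdReachConf R R.C0
  | step : ∀ C A, FwdReachConf R C → R.Enabled C A ∅ → FwdReachConf R ((C \ ∅) ∪ A)

/-- The one-step removal operator: the residual of `R` after the step `A ∪ B̲`. -/
def residStep (R : RPESData E L) (A B : Set E) : RPESData E L :=
  let At : Set E := (A \ R.F) ∪ {a | a ∈ R.F ∧ ∃ x ∈ A \ R.F, R.lt a x}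
  let CA : Set E := {e | e ∈ R.carrier ∧ ∃ a ∈ At, R.conf e a}
  let E' : Set E := R.carrier \ (At ∪ CA)
  let F' : Set E := (R.F ∩ E') \
    ({e | e ∈ R.F ∧ ∃ a ∈ CA, R.rc a e} ∪ {e | e ∈ R.F ∧ ∃ a ∈ At, R.prev a e})
  { carrier := E'
    lt := fun a b => R.lt a b ∧ a ∈ E' ∧ b ∈ E'
    conf := fun a b => R.conf a b ∧ a ∈ E' ∧ b ∈ E'
    label := R.label
    F := F'
    rc := fun a b => R.rc a b ∧ a ∈ E' ∧ b ∈ F'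
    prev := fun a b => R.prev a b ∧ a ∈ E' ∧ b ∈ F'
    C0 := ((R.C0 \ B) ∪ A) ∩ E' }

/-- The residual `R \ t` of `R` after a trace `t`. -/
def resid (R : RPESData E L) (t : List (Set E × Set E)) : RPESData E L :=
  t.foldl (fun S p => S.residStep p.1 p.2) R

/-- The multiset (as a function `L → ℕ`) of action labels of the step `A ∪ B̲`. -/
noncomputable def stepLabel (R : RPESData E L) (A B : Set E) : L → ℕ :=
  fun a => Nat.card {e : E // e ∈ A ∪ B ∧ R.label e = a}

/-- Forgetting the reversibility structure. -/
def toPES (R : RPESData E L) : PESData E L :=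
  ⟨R.carrier, R.lt, R.conf, R.label⟩

end RPESData

namespace PESData

variable {E : Type} {L : Type}

/-- The axioms of a prime event structure. -/
structure IsPES (P : PESData E L) : Prop where
  countable : P.carrier.Countable
  lt_carrier : ∀ a b, P.lt a b → a ∈ P.carrier ∧ b ∈ P.carrier
  conf_carrier : ∀ a b, P.conf a b → a ∈ P.carrier ∧ b ∈ P.carrier
  lt_irrefl : ∀ a, ¬ P.lt a a
  lt_trans : ∀ a b c, P.lt a b → P.lt b c → P.lt a c
  causes_finite : ∀ e, {e' | P.lt e' e}.Finite
  conf_irrefl : ∀ a, ¬ P.conf a a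
  conf_symm : ∀ a b, P.conf a b → P.conf b a
  conf_hered : ∀ a b c, P.conf a b → P.lt b c → P.conf a c

/-- `φ(E, F)`: the RPES obtained from a PES by declaring the events in `F`
reversible, with `e ≺ e̲` for `e ∈ F` and `e ▷ e̲'` whenever `e' ∈ F`, `e' < e`. -/
def toRPES (P : PESData E L) (F : Set E) : RPESData E L :=
  { carrier := P.carrier
    lt := P.lt
    conf := P.conf
    label := P.label
    F := F
    rc := fun e u => u ∈ F ∧ e = u
    prev := fun e u => u ∈ F ∧ P.lt u e
    C0 := ∅ }

end PESData

/-- A labeled transition system. -/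
structure LTS (S : Type) (Λ : Type) where
  tr : S → Λ → S → Prop
  init : S

/-- Bisimulation between labeled transition systems. -/
def IsBisimulation {S S' Λ : Type} (T : LTS S Λ) (T' : LTS S' Λ)
    (Rl : S → S' → Prop) : Prop :=
  Rl T.init T'.init ∧
  (∀ s s', Rl s s' → ∀ M s₁, T.tr s M s₁ → ∃ s₁', T'.tr s' M s₁' ∧ Rl s₁ s₁') ∧
  (∀ s s', Rl s s' → ∀ M s₁', T'.tr s' M s₁' → ∃ s₁, T.tr s M s₁ ∧ Rl s₁ s₁')

namespace RPESData

variable {E : Type} {L : Type}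

/-- Transition relation of the configuration transition system `TC(R)`. -/
def confTr (R : RPESData E L) (C : Set E) (M : L → ℕ) (C' : Set E) : Prop :=
  R.ReachConf C ∧ ∃ A B, R.Enabled C A B ∧ C' = (C \ B) ∪ A ∧ M = R.stepLabel A B

/-- The configuration transition system `TC(R)`. -/
def TC (R : RPESData E L) : LTS (Set E) (L → ℕ) :=
  ⟨R.confTr, R.C0⟩

/-- Transition relation between residuals: `F ⇀^M F'` iff `F' = F \ (A ∪ B̲)` for
a one-step trace `A ∪ B̲` of `F` with label multiset `M`. -/
def residTr (R' : RPESData E L) (M : L → ℕ) (R'' : RPESData E L) : Prop :=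
  ∃ A B, R'.Enabled R'.C0 A B ∧ R'' = R'.residStep A B ∧ M = R'.stepLabel A B

/-- Residuals reachable from `R` via `residTr`. -/
inductive ReachRes (R : RPESData E L) : RPESData E L → Prop
  | init : ReachRes R R
  | step : ∀ R' M R'', ReachRes R R' → residTr R' M R'' → ReachRes R R''

/-- The residual transition system `TE(R)`. -/
def TE (R : RPESData E L) : LTS (RPESData E L) (L → ℕ) :=
  ⟨residTr, R⟩

end RPESData

namespace RPESData

variable {E L : Type} {R : RPESData E L}

theorem Causal.sc_iff (hR : R.Causal) {a b : E} : R.SC a b ↔ R.lt a b :=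
  ⟨And.left, fun hab => ⟨hab, fun ha => (hR.2 b a ha).2 hab⟩⟩

theorem Causal.causeRespecting (hR : R.Causal) : R.CauseRespecting :=
  fun _ _ => hR.sc_iff.2

end RPESData

namespace PESData

variable {E L : Type} {P : PESData E L}

theorem IsPES.not_conf_of_lt_of_lt (h : P.IsPES) {a b e : E} (ha : P.lt a e) (hb : P.lt b e) :
    ¬ P.conf a b := fun hab =>
  h.conf_irrefl e (h.conf_hered _ _ _ (h.conf_symm _ _ (h.conf_hered _ _ _ hab hb)) ha)

theorem toRPES_causal (F : Set E) : (P.toRPES F).Causal :=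
  ⟨fun _ _ hu => ⟨And.right, fun heq => ⟨hu, heq⟩⟩,
    fun _ _ hu => ⟨And.right, fun hlt => ⟨hu, hlt⟩⟩⟩

theorem toRPES_rcauses {F : Set E} {u : E} (hu : u ∈ F) :
    {e | (P.toRPES F).rc e u} = {u} :=
  Set.ext fun _ => ⟨And.right, fun heq => ⟨hu, heq⟩⟩

theorem IsPES.isRPES_toRPES (h : P.IsPES) {F : Set E} (hF : F ⊆ P.carrier) :
    (P.toRPES F).IsRPES where
  countable := h.countable
  lt_carrier := h.lt_carrier
  conf_carrier := h.conf_carrier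
  conf_irrefl := h.conf_irrefl
  conf_symm := h.conf_symm
  lt_irrefl := h.lt_irrefl
  lt_trans := h.lt_trans
  causes_finite := h.causes_finite
  causes_cf _ _ ha _ hb := h.not_conf_of_lt_of_lt ha hb
  F_carrier := hF
  rc_carrier := by
    rintro a _ ⟨hb, rfl⟩
    exact ⟨hF hb, hb⟩
  rc_refl _ hu := ⟨hu, rfl⟩
  rcauses_finite u hu := by
    rw [toRPES_rcauses (P := P) (F := F) hu]
    exact Set.finite_singleton u
  rcauses_cf u hu := by
    rw [toRPES_rcauses (P := P) (F := F) hu]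
    rintro _ rfl _ rfl
    exact h.conf_irrefl _
  prev_carrier := by
    rintro a b ⟨hb, hba⟩
    exact ⟨(h.lt_carrier _ _ hba).2, hb⟩
  prev_rc_disjoint := by
    rintro a _ ⟨⟨_, haa⟩, _, rfl⟩
    exact h.lt_irrefl a haa
  sc_trans a b c hab hbc := by
    rw [(toRPES_causal F).sc_iff] at hab hbc ⊢
    exact h.lt_trans a b c hab hbc
  conf_hered_sc a b c hab hbc := h.conf_hered a b c hab ((toRPES_causal F).sc_iff.1 hbc)
  C0_carrier := Set.empty_subset _
  C0_finite := Set.finite_empty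
  C0_closed _ he := absurd he (Set.notMem_empty _)
  C0_cf _ he := absurd he (Set.notMem_empty _)

end PESData

/-- For a PES `P` and any `F ⊆ E`, the structure `φ(P, F)` is a
causal (hence cause-respecting) RPES. -/
theorem pes_toRPES_causal {E L : Type} (P : PESData E L) (h : P.IsPES)
    (F : Set E) (hF : F ⊆ P.carrier) :
    (P.toRPES F).IsRPES ∧ (P.toRPES F).Causal ∧ (P.toRPES F).CauseRespecting :=
  ⟨h.isRPES_toRPES hF, P.toRPES_causal F, (P.toRPES_causal F).causeRespecting⟩
end

section
/- For any RPES E and traces t, t(A∪B̲) ∈ Traces(E): the step last(t) →^{A∪B̲} last(t(A∪B̲)) holds; conversely, for traces t, t' ∈ Traces(E), if last(t) →^{A∪B̲} last(t'), then t(A∪B̲) ∈ Traces(E) and last(t(A∪B̲)) = last(t'). -/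
namespace RPESData

variable {E : Type} {L : Type}

variable (R : RPESData E L)

theorem isTraceFrom_append (t s : List (Set E × Set E)) (C C' : Set E) :
    R.IsTraceFrom C (t ++ s) C' ↔ ∃ D, R.IsTraceFrom C t D ∧ R.IsTraceFrom D s C' := by
  induction t generalizing C with
  | nil => simp [IsTraceFrom]
  | cons p t ih => simp only [List.cons_append, IsTraceFrom, ih, and_assoc, exists_and_left]

theorem isTraceFrom_singleton (C A B C' : Set E) :
    R.IsTraceFrom C [(A, B)] C' ↔ R.Enabled C A B ∧ C' = (C \ B) ∪ A := by
  simp [IsTraceFrom]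

theorem isTraceFrom_concat (t : List (Set E × Set E)) (C A B C' : Set E) :
    R.IsTraceFrom C (t ++ [(A, B)]) C' ↔
      ∃ D, R.IsTraceFrom C t D ∧ R.Enabled D A B ∧ C' = (D \ B) ∪ A := by
  simp only [isTraceFrom_append, isTraceFrom_singleton]

variable {R} in
theorem IsTraceFrom.unique {t : List (Set E × Set E)} {C C₁ C₂ : Set E}
    (h₁ : R.IsTraceFrom C t C₁) (h₂ : R.IsTraceFrom C t C₂) : C₁ = C₂ := by
  induction t generalizing C with
  | nil => exact h₁.trans h₂.symm
  | cons p t ih => exact ih h₁.2 h₂.2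

end RPESData

theorem trace_extend_iff_step_general {E L : Type} (R : RPESData E L) :
    (∀ t A B C C', R.IsTraceTo t C → R.IsTraceTo (t ++ [(A, B)]) C' →
      R.Enabled C A B ∧ C' = (C \ B) ∪ A) ∧
    (∀ t t' A B C C', R.IsTraceTo t C → R.IsTraceTo t' C' →
      R.Enabled C A B → (C \ B) ∪ A = C' →
      R.IsTraceTo (t ++ [(A, B)]) C') := by
  constructor
  · intro t A B C C' ht ht'
    obtain ⟨D, hD, hstep⟩ := (R.isTraceFrom_concat t _ A B C').1 ht'
    obtain rfl : D = C := hD.unique ht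
    exact hstep
  · intro t _ A B C C' ht _ hstep hlast
    exact (R.isTraceFrom_concat t _ A B C').2 ⟨C, ht, hstep, hlast.symm⟩

/-- If `t(A∪B̲)` is a trace then `last(t) →^{A∪B̲} last(t(A∪B̲))`;
conversely, if `last(t) →^{A∪B̲} last(t')` then `t(A∪B̲)` is a trace and
`last(t(A∪B̲)) = last(t')`. -/
theorem trace_extend_iff_step {E L : Type} (R : RPESData E L) (h : R.IsRPES) :
    (∀ t A B C C', R.IsTraceTo t C → R.IsTraceTo (t ++ [(A, B)]) C' →
      R.Enabled C A B ∧ C' = (C \ B) ∪ A) ∧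
    (∀ t t' A B C C', R.IsTraceTo t C → R.IsTraceTo t' C' →
      R.Enabled C A B → (C \ B) ∪ A = C' →
      R.IsTraceTo (t ++ [(A, B)]) C') :=
  trace_extend_iff_step_general R
end

section
/- In a cause-respecting RPES, every reachable configuration is left-closed under causality: if C ∈ Conf(E) and e ∈ C and e' < e, then e' ∈ C. -/
namespace RPESData

variable {E L : Type}

def IsLeftClosed (R : RPESData E L) (X : Set E) : Prop :=
  ∀ e ∈ X, ∀ e', R.lt e' e → e' ∈ X

variable {R : RPESData E L}

namespace Enabled

variable {C A B : Set E}

theorem cause_mem_sdiff (hen : R.Enabled C A B) {e e' : E} (he : e ∈ A) (hlt : R.lt e' e) :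
    e' ∈ C \ B :=
  hen.2.2.2.2.2.2.2.1 e he e' hlt

/-- Since `e' ≪ e` with `e'` reversible means `e ▷ e'̲`, the event `e ∈ C` prevents undoing `e'`. -/
theorem not_mem_of_sc (hen : R.Enabled C A B) {e e' : E} (he : e ∈ C) (hsc : R.SC e' e) :
    e' ∉ B := fun he'B =>
  hen.2.2.2.2.2.2.2.2.2 e' he'B e (hsc.2 (hen.2.2.2.1 he'B)) (Or.inl he)

theorem isLeftClosed_step (hcr : R.CauseRespecting) (hen : R.Enabled C A B)
    (hC : R.IsLeftClosed C) : R.IsLeftClosed ((C \ B) ∪ A) := by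
  rintro e (⟨heC, -⟩ | heA) e' hlt
  · exact Or.inl ⟨hC e heC e' hlt, hen.not_mem_of_sc heC (hcr e' e hlt)⟩
  · exact Or.inl (hen.cause_mem_sdiff heA hlt)

end Enabled

theorem ReachConf.isLeftClosed (h0 : R.IsLeftClosed R.C0) (hcr : R.CauseRespecting) {C : Set E}
    (hC : R.ReachConf C) : R.IsLeftClosed C := by
  induction hC with
  | init => exact h0
  | step C A B _ hen ih => exact hen.isLeftClosed_step hcr ih

end RPESData

/-- In a cause-respecting RPES, every reachable configuration is
left-closed under causality. -/
theorem reachable_leftClosed {E L : Type} (R : RPESData E L) (h : R.IsRPES)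
    (hcr : R.CauseRespecting) (C : Set E) (hC : R.ReachConf C) :
    ∀ e ∈ C, ∀ e', R.lt e' e → e' ∈ C :=
  hC.isLeftClosed h.C0_closed hcr
end

section
/- For a cause-respecting RPES E and any trace t, the residual E \ t is again a cause-respecting RPES (in particular, every prefix-wise residual E \ tᵢ is a cause-respecting RPES). -/
/-!
In a cause-respecting RPES a reversible cause `a` of an event `x` satisfies `x ▷ a̲`, so once
`x` is executed `a` can never be reversed again. Hence, after a step `A ∪ B̲`, the set `Ã` of
executed irreversible events and their reversible causes stays inside every configuration
reachable afterwards. Consequently every later step avoids `Ã` and the events in conflict with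
it, and is a step of the residual. The residual itself is a restriction of the RPES to a subset
of events with fewer reversible events; causality, being sustained causation, survives any such
restriction, and so do all the other axioms.
-/

namespace RPESData

variable {E : Type} {L : Type}

lemma ConflictFree.mono {S : RPESData E L} {X Y : Set E} (h : S.ConflictFree X) (hYX : Y ⊆ X) :
    S.ConflictFree Y :=
  fun e he e' he' => h e (hYX he) e' (hYX he')

section Step

variable {S : RPESData E L} {C A B : Set E}

lemma Enabled.finite_step (hen : S.Enabled C A B) (hC : C.Finite) : ((C \ B) ∪ A).Finite :=
  hC.sdiff.union hen.1

lemma Enabled.conflictFree_step (hen : S.Enabled C A B) : S.ConflictFree ((C \ B) ∪ A) :=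
  hen.2.2.2.2.2.2.1.mono (Set.union_subset_union_left A Set.sdiff_subset)

lemma Enabled.lt_mem_step (hcr : S.CauseRespecting) (hen : S.Enabled C A B)
    (hC : ∀ e ∈ C, ∀ e', S.lt e' e → e' ∈ C) :
    ∀ e ∈ (C \ B) ∪ A, ∀ e', S.lt e' e → e' ∈ (C \ B) ∪ A := by
  obtain ⟨-, -, -, hBF, -, -, -, hcauses, -, hprev⟩ := hen
  rintro e (⟨heC, -⟩ | heA) e' hlt
  · refine Or.inl ⟨hC e heC e' hlt, fun he'B => ?_⟩
    exact hprev e' he'B e ((hcr e' e hlt).2 (hBF he'B)) (Or.inl heC)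
  · exact Or.inl (hcauses e heA e' hlt)

end Step

def restrict (S : RPESData E L) (X F' C' : Set E) : RPESData E L where
  carrier := X
  lt a b := S.lt a b ∧ a ∈ X ∧ b ∈ X
  conf a b := S.conf a b ∧ a ∈ X ∧ b ∈ X
  label := S.label
  F := F'
  rc a b := S.rc a b ∧ a ∈ X ∧ b ∈ F'
  prev a b := S.prev a b ∧ a ∈ X ∧ b ∈ F'
  C0 := C'

section Restrict

variable {S : RPESData E L} {X F' C' : Set E}

lemma CauseRespecting.restrict (hcr : S.CauseRespecting) (hFF : F' ⊆ S.F) :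
    (S.restrict X F' C').CauseRespecting := by
  rintro a b ⟨hlt, ha, hb⟩
  exact ⟨⟨hlt, ha, hb⟩, fun haF => ⟨(hcr a b hlt).2 (hFF haF), hb, haF⟩⟩

lemma IsRPES.restrict (hS : S.IsRPES) (hcr : S.CauseRespecting) (hX : X ⊆ S.carrier)
    (hFF : F' ⊆ S.F) (hFX : F' ⊆ X) (hCX : C' ⊆ X) (hCfin : C'.Finite)
    (hCclosed : ∀ e ∈ C', ∀ e' ∈ X, S.lt e' e → e' ∈ C') (hCcf : S.ConflictFree C') :
    (S.restrict X F' C').IsRPES where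
  countable := hS.countable.mono hX
  lt_carrier _ _ h := h.2
  conf_carrier _ _ h := h.2
  conf_irrefl a h := hS.conf_irrefl a h.1
  conf_symm a b h := ⟨hS.conf_symm a b h.1, h.2.2, h.2.1⟩
  lt_irrefl a h := hS.lt_irrefl a h.1
  lt_trans a b c h₁ h₂ := ⟨hS.lt_trans a b c h₁.1 h₂.1, h₁.2.1, h₂.2.2⟩
  causes_finite e := (hS.causes_finite e).subset fun _ hx => hx.1
  causes_cf e a ha b hb hab := hS.causes_cf e a ha.1 b hb.1 hab.1
  F_carrier := hFX
  rc_carrier _ _ h := h.2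
  rc_refl u hu := ⟨hS.rc_refl u (hFF hu), hFX hu, hu⟩
  rcauses_finite u hu := (hS.rcauses_finite u (hFF hu)).subset fun _ hx => hx.1
  rcauses_cf u hu a ha b hb hab := hS.rcauses_cf u (hFF hu) a ha.1 b hb.1 hab.1
  prev_carrier _ _ h := h.2
  prev_rc_disjoint a b h := hS.prev_rc_disjoint a b ⟨h.1.1, h.2.1⟩
  sc_trans a b c h₁ h₂ :=
    (hcr.restrict hFF) a c ⟨hS.lt_trans a b c h₁.1.1 h₂.1.1, h₁.1.2.1, h₂.1.2.2⟩
  conf_hered_sc a b c h₁ h₂ :=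
    ⟨hS.conf_hered_sc a b c h₁.1 (hcr b c h₂.1.1), h₁.2.1, h₂.1.2.2⟩
  C0_carrier := hCX
  C0_finite := hCfin
  C0_closed e he e' h := hCclosed e he e' h.2.1 h.1
  C0_cf e he e' he' h := hCcf e he e' he' h.1

lemma Enabled.restrict {D A B : Set E} (hen : S.Enabled D A B) (hAX : A ⊆ X) (hBF : B ⊆ F')
    (hFX : F' ⊆ X) : (S.restrict X F' C').Enabled (D ∩ X) A B := by
  obtain ⟨hAfin, hBfin, -, -, hAD, hBD, hcf, hcauses, hrcauses, hprev⟩ := hen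
  refine ⟨hAfin, hBfin, hAX, hBF, ?_, fun u hu => ⟨hBD hu, hFX (hBF hu)⟩, ?_, ?_, ?_, ?_⟩
  · exact Set.subset_empty_iff.mp (hAD ▸ Set.inter_subset_inter_right A Set.inter_subset_left)
  · exact fun e he e' he' h =>
      hcf e (Set.union_subset_union_left A Set.inter_subset_left he)
        e' (Set.union_subset_union_left A Set.inter_subset_left he') h.1
  · rintro e he e' ⟨hlt, he'X, -⟩
    obtain ⟨he'D, he'B⟩ := hcauses e he e' hlt
    exact ⟨⟨he'D, he'X⟩, he'B⟩
  · rintro e he e' ⟨hrc, he'X, -⟩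
    obtain ⟨he'D, he'B⟩ := hrcauses e he e' hrc
    exact ⟨⟨he'D, he'X⟩, he'B⟩
  · exact fun e he e' h hmem =>
      hprev e he e' h.1 (Set.union_subset_union_left A Set.inter_subset_left hmem)

end Restrict

/-- The set `Ã` of executed irreversible events of `A` together with their reversible causes. -/
def fixedEvents (S : RPESData E L) (A : Set E) : Set E :=
  (A \ S.F) ∪ {a | a ∈ S.F ∧ ∃ x ∈ A \ S.F, S.lt a x}

def fixedConflicts (S : RPESData E L) (A : Set E) : Set E :=
  {e | e ∈ S.carrier ∧ ∃ a ∈ S.fixedEvents A, S.conf e a}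

def residCarrier (S : RPESData E L) (A : Set E) : Set E :=
  S.carrier \ (S.fixedEvents A ∪ S.fixedConflicts A)

def residF (S : RPESData E L) (A : Set E) : Set E :=
  (S.F ∩ S.residCarrier A) \
    ({e | e ∈ S.F ∧ ∃ a ∈ S.fixedConflicts A, S.rc a e} ∪
      {e | e ∈ S.F ∧ ∃ a ∈ S.fixedEvents A, S.prev a e})

lemma residStep_eq_restrict (S : RPESData E L) (A B : Set E) :
    S.residStep A B =
      S.restrict (S.residCarrier A) (S.residF A) (((S.C0 \ B) ∪ A) ∩ S.residCarrier A) :=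
  rfl

lemma Enabled.fixedEvents_own_subset {S : RPESData E L} {A B : Set E} (hen : S.Enabled S.C0 A B) :
    S.fixedEvents A ⊆ (S.C0 \ B) ∪ A := by
  rintro a (⟨haA, -⟩ | ⟨-, x, hxA, hlt⟩)
  · exact Or.inr haA
  · exact Or.inl (hen.2.2.2.2.2.2.2.1 x hxA.1 a hlt)

lemma isRPES_residStep {S : RPESData E L} {A B : Set E} (hS : S.IsRPES)
    (hcr : S.CauseRespecting) (hen : S.Enabled S.C0 A B) : (S.residStep A B).IsRPES := by
  rw [residStep_eq_restrict]
  exact hS.restrict hcr Set.sdiff_subset (fun _ hu => hu.1.1) (fun _ hu => hu.1.2)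
    Set.inter_subset_right ((hen.finite_step hS.C0_finite).subset Set.inter_subset_left)
    (fun e he e' he'X hlt => ⟨hen.lt_mem_step hcr hS.C0_closed e he.1 e' hlt, he'X⟩)
    (hen.conflictFree_step.mono Set.inter_subset_left)

section LaterStep

variable {S : RPESData E L} {A D A' B' : Set E}

lemma Enabled.disjoint_fixedEvents (hcr : S.CauseRespecting) (hfix : S.fixedEvents A ⊆ D)
    (hen : S.Enabled D A' B') : Disjoint B' (S.fixedEvents A) := by
  obtain ⟨-, -, -, hBF, -, -, -, -, -, hprev⟩ := hen
  rw [Set.disjoint_left]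
  rintro u huB (⟨-, huF⟩ | ⟨huF, x, hxA, hlt⟩)
  · exact huF (hBF huB)
  · exact hprev u huB x ((hcr u x hlt).2 huF) (Or.inl (hfix (Or.inl hxA)))

lemma Enabled.not_mem_fixedConflicts (hfix : S.fixedEvents A ⊆ D) (hen : S.Enabled D A' B') :
    ∀ x ∈ D ∪ A', x ∉ S.fixedConflicts A := by
  rintro x hx ⟨-, a, ha, hconf⟩
  exact hen.2.2.2.2.2.2.1 x hx a (Or.inl (hfix ha)) hconf

lemma Enabled.subset_residCarrier (hfix : S.fixedEvents A ⊆ D) (hen : S.Enabled D A' B') :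
    A' ⊆ S.residCarrier A := by
  refine fun x hx => ⟨hen.2.2.1 hx, ?_⟩
  rintro (hxfix | hxconf)
  · exact Set.eq_empty_iff_forall_notMem.mp hen.2.2.2.2.1 x ⟨hx, hfix hxfix⟩
  · exact hen.not_mem_fixedConflicts hfix x (Or.inr hx) hxconf

lemma Enabled.subset_residF (hS : S.IsRPES) (hcr : S.CauseRespecting)
    (hfix : S.fixedEvents A ⊆ D) (hen : S.Enabled D A' B') : B' ⊆ S.residF A := by
  have hdisj := hen.disjoint_fixedEvents hcr hfix
  have hconf := hen.not_mem_fixedConflicts hfix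
  obtain ⟨-, -, -, hBF, -, hBD, -, -, hrcauses, hprev⟩ := hen
  intro u hu
  have huE : u ∈ S.residCarrier A := by
    refine ⟨hS.F_carrier (hBF hu), ?_⟩
    rintro (hufix | huconf)
    · exact Set.disjoint_left.mp hdisj hu hufix
    · exact hconf u (Or.inl (hBD hu)) huconf
  refine ⟨⟨hBF hu, huE⟩, ?_⟩
  rintro (⟨-, a, haconf, hrc⟩ | ⟨-, a, hafix, hp⟩)
  · exact hconf a (Or.inl (hrcauses u hu a hrc).1) haconf
  · exact hprev u hu a hp (Or.inl (hfix hafix))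

lemma Enabled.fixedEvents_subset_step (hcr : S.CauseRespecting) (hfix : S.fixedEvents A ⊆ D)
    (hen : S.Enabled D A' B') : S.fixedEvents A ⊆ (D \ B') ∪ A' :=
  fun _ ha => Or.inl ⟨hfix ha, fun haB => Set.disjoint_left.mp
    (hen.disjoint_fixedEvents hcr hfix) haB ha⟩

lemma IsTraceFrom.residStep (hS : S.IsRPES) (hcr : S.CauseRespecting) (B : Set E) :
    ∀ {t : List (Set E × Set E)} {D C : Set E}, S.fixedEvents A ⊆ D → S.IsTraceFrom D t C →
      (S.residStep A B).IsTraceFrom (D ∩ S.residCarrier A) t (C ∩ S.residCarrier A)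
  | [], D, C, _, h => congrArg (· ∩ S.residCarrier A) h
  | p :: t, D, C, hfix, ⟨hen, htail⟩ => by
    have hA := hen.subset_residCarrier hfix
    refine ⟨hen.restrict hA (hen.subset_residF hS hcr hfix) fun _ hu => hu.1.2, ?_⟩
    have hnext : ((D ∩ S.residCarrier A) \ p.2) ∪ p.1 =
        ((D \ p.2) ∪ p.1) ∩ S.residCarrier A := by
      ext x
      have := @hA x
      simp only [Set.mem_union, Set.mem_inter_iff, Set.mem_sdiff]
      tauto
    rw [hnext]
    exact IsTraceFrom.residStep hS hcr B (hen.fixedEvents_subset_step hcr hfix) htail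

end LaterStep

lemma IsTraceFrom.take {S : RPESData E L} :
    ∀ {t : List (Set E × Set E)} {C C' : Set E} (k : ℕ), S.IsTraceFrom C t C' →
      ∃ C'', S.IsTraceFrom C (t.take k) C''
  | [], C, _, _, _ => ⟨C, by simp [IsTraceFrom]⟩
  | _ :: _, C, _, 0, _ => ⟨C, rfl⟩
  | _ :: _, _, _, k + 1, ⟨hen, htail⟩ =>
    let ⟨C'', h⟩ := htail.take k
    ⟨C'', hen, h⟩

lemma IsTrace.take {S : RPESData E L} {t : List (Set E × Set E)} (ht : S.IsTrace t) (k : ℕ) :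
    S.IsTrace (t.take k) :=
  let ⟨_, h⟩ := ht
  h.take k

lemma isRPES_resid_of_isTrace :
    ∀ {S : RPESData E L} {t : List (Set E × Set E)}, S.IsRPES → S.CauseRespecting →
      S.IsTrace t → (S.resid t).IsRPES ∧ (S.resid t).CauseRespecting
  | _, [], hS, hcr, _ => ⟨hS, hcr⟩
  | S, p :: _, hS, hcr, ⟨_, hen, htail⟩ =>
    isRPES_resid_of_isTrace (S := S.residStep p.1 p.2) (isRPES_residStep hS hcr hen)
      (hcr.restrict fun _ hu => hu.1.1)
      ⟨_, htail.residStep hS hcr p.2 hen.fixedEvents_own_subset⟩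

end RPESData

theorem resid_causeRespecting_rpes_general {E L : Type} (R : RPESData E L)
    (h : R.IsRPES) (hcr : R.CauseRespecting) (t : List (Set E × Set E))
    (ht : R.IsTrace t) (k : ℕ) :
    (R.resid (t.take k)).IsRPES ∧ (R.resid (t.take k)).CauseRespecting :=
  RPESData.isRPES_resid_of_isTrace h hcr (ht.take k)

/-- For a cause-respecting RPES `R` and any trace `t`, every
prefix-wise residual `R \ tᵢ` (in particular `R \ t` itself) is again a
cause-respecting RPES. -/
theorem resid_causeRespecting_rpes {E L : Type} (R : RPESData E L)
    (h : R.IsRPES) (hcr : R.CauseRespecting) (t : List (Set E × Set E))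
    (ht : R.IsTrace t) (k : ℕ) (hk : k ≤ t.length) :
    (R.resid (t.take k)).IsRPES ∧ (R.resid (t.take k)).CauseRespecting :=
  resid_causeRespecting_rpes_general R h hcr t ht k
end

section
/- For a cause-respecting RPES E with trace t = (A₁∪B̲₁)…(Aₙ∪B̲ₙ), each reversed set is still reversible in the preceding residual: Bᵢ ⊆ F^{i-1} for all 1 ≤ i ≤ n, and each executed set is still present: Aᵢ ⊆ E^{i-1} for all 1 ≤ i ≤ n. -/
/-! Idea: call an event committed by a step `A` if it is an irreversible event of `A` or a
reversible cause of one. In a cause-respecting RPES every reversible cause `x < z` of an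
irreversible `z` satisfies `z ▷ x̲`, so once executed a committed event can never be undone.
Hence every later step is enabled at a configuration containing all committed events, and
conflict-freeness of that configuration together with the enabling conditions of the step
show that the events it executes or reverses are not discarded by the residual. -/

namespace RPESData

variable {E L : Type} {R S : RPESData E L}

/-- The paper's `Ã` for a step `A`. -/
def committed (S : RPESData E L) (A : Set E) : Set E :=
  (A \ S.F) ∪ {a | a ∈ S.F ∧ ∃ x ∈ A \ S.F, S.lt a x}

/-- The paper's `#(Ã)`. -/
def committedConflicts (S : RPESData E L) (A : Set E) : Set E :=
  {e | e ∈ S.carrier ∧ ∃ a ∈ S.committed A, S.conf e a}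

lemma residStep_carrier (S : RPESData E L) (A B : Set E) :
    (S.residStep A B).carrier = S.carrier \ (S.committed A ∪ S.committedConflicts A) :=
  rfl

lemma residStep_F (S : RPESData E L) (A B : Set E) :
    (S.residStep A B).F =
      (S.F ∩ (S.carrier \ (S.committed A ∪ S.committedConflicts A))) \
        ({e | e ∈ S.F ∧ ∃ a ∈ S.committedConflicts A, S.rc a e} ∪
          {e | e ∈ S.F ∧ ∃ a ∈ S.committed A, S.prev a e}) :=
  rfl

structure IsRestrictionOf (S R : RPESData E L) : Prop where
  F_subset : S.F ⊆ R.F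
  F_subset_carrier : S.F ⊆ S.carrier
  lt : ∀ a b, S.lt a b → R.lt a b
  conf : ∀ a b, S.conf a b → R.conf a b
  rc : ∀ a b, S.rc a b → R.rc a b
  prev : ∀ a b, S.prev a b → R.prev a b

lemma IsRestrictionOf.refl (h : R.IsRPES) : R.IsRestrictionOf R :=
  ⟨subset_rfl, h.F_carrier, fun _ _ => id, fun _ _ => id, fun _ _ => id, fun _ _ => id⟩

lemma IsRestrictionOf.residStep (hS : S.IsRestrictionOf R) (A B : Set E) :
    (S.residStep A B).IsRestrictionOf R where
  F_subset _ hx := hS.F_subset hx.1.1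
  F_subset_carrier _ hx := hx.1.2
  lt a b hab := hS.lt a b hab.1
  conf a b hab := hS.conf a b hab.1
  rc a b hab := hS.rc a b hab.1
  prev a b hab := hS.prev a b hab.1

def StepsWithin (S : RPESData E L) (t : List (Set E × Set E)) : Prop :=
  ∀ p ∈ t, p.1 ⊆ S.carrier ∧ p.2 ⊆ S.F

lemma Enabled.subset_of_persistent {C A B X : Set E} (hen : R.Enabled C A B) (hXC : X ⊆ C)
    (hX : ∀ x ∈ X, x ∉ B ∨ ∃ y ∈ X, R.prev y x) : X ⊆ (C \ B) ∪ A := by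
  obtain ⟨-, -, -, -, -, -, -, -, -, hprev⟩ := hen
  intro x hx
  refine Or.inl ⟨hXC hx, fun hxB => ?_⟩
  obtain hxB' | ⟨y, hy, hyx⟩ := hX x hx
  · exact hxB' hxB
  · exact hprev x hxB y hyx (Or.inl (hXC hy))

lemma IsTraceFrom.exists_enabled_superset {t : List (Set E × Set E)} {C C' X : Set E}
    (htr : R.IsTraceFrom C t C') (hXC : X ⊆ C)
    (hX : ∀ x ∈ X, (∀ p ∈ t, x ∉ p.2) ∨ ∃ y ∈ X, R.prev y x) :
    ∀ p ∈ t, ∃ D, X ⊆ D ∧ R.Enabled D p.1 p.2 := by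
  induction t generalizing C with
  | nil => simp
  | cons q rest ih =>
    obtain ⟨hen, htr⟩ := htr
    intro p hp
    obtain rfl | hp := List.mem_cons.mp hp
    · exact ⟨C, hXC, hen⟩
    · refine ih htr (hen.subset_of_persistent hXC fun x hx => ?_) (fun x hx => ?_) p hp
      · exact (hX x hx).imp_left fun hnot => hnot q List.mem_cons_self
      · exact (hX x hx).imp_left fun hnot r hr => hnot r (List.mem_cons_of_mem q hr)

lemma IsTraceFrom.stepsWithin {t : List (Set E × Set E)} {C C' : Set E}
    (htr : R.IsTraceFrom C t C') : R.StepsWithin t := by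
  intro p hp
  obtain ⟨D, -, -, -, hA, hB, -⟩ :=
    htr.exists_enabled_superset (Set.empty_subset C) (by simp) p hp
  exact ⟨hA, hB⟩

lemma Enabled.committed_subset {C A B : Set E} (hen : R.Enabled C A B)
    (hS : S.IsRestrictionOf R) : S.committed A ⊆ (C \ B) ∪ A := by
  obtain ⟨-, -, -, -, -, -, -, hcauses, -⟩ := hen
  rintro x (⟨hxA, -⟩ | ⟨-, z, hz, hxz⟩)
  · exact Or.inr hxA
  · exact Or.inl (hcauses z hz.1 x (hS.lt x z hxz))

lemma committed_persistent (hcr : R.CauseRespecting) (hS : S.IsRestrictionOf R) {A : Set E}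
    {t : List (Set E × Set E)} (ht : S.StepsWithin t) :
    ∀ x ∈ S.committed A, (∀ p ∈ t, x ∉ p.2) ∨ ∃ y ∈ S.committed A, R.prev y x := by
  rintro x (⟨-, hxF⟩ | ⟨hxF, z, hz, hxz⟩)
  · exact Or.inl fun p hp hxp => hxF ((ht p hp).2 hxp)
  · exact Or.inr ⟨z, Or.inl hz, (hcr x z (hS.lt x z hxz)).2 (hS.F_subset hxF)⟩

lemma Enabled.subset_residStep_carrier {A B D A' B' : Set E} (hen : R.Enabled D A' B')
    (hS : S.IsRestrictionOf R) (hD : S.committed A ⊆ D) (hA' : A' ⊆ S.carrier) :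
    A' ⊆ (S.residStep A B).carrier := by
  rw [residStep_carrier]
  obtain ⟨-, -, -, -, hA'D, -, hcf, -⟩ := hen
  intro e he
  have heD : e ∉ D := fun heD => (Set.eq_empty_iff_forall_notMem.mp hA'D) e ⟨he, heD⟩
  refine ⟨hA' he, ?_⟩
  rintro (heA | ⟨-, a, ha, hea⟩)
  · exact heD (hD heA)
  · exact hcf e (Or.inr he) a (Or.inl (hD ha)) (hS.conf e a hea)

lemma Enabled.subset_residStep_F {A B D A' B' : Set E} (hen : R.Enabled D A' B')
    (hS : S.IsRestrictionOf R) (hD : S.committed A ⊆ D) (hcr : R.CauseRespecting)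
    (hB' : B' ⊆ S.F) : B' ⊆ (S.residStep A B).F := by
  rw [residStep_F]
  obtain ⟨-, -, -, -, -, hB'D, hcf, -, hrc, hprev⟩ := hen
  have hDcf : ∀ a ∈ D, ∀ b ∈ D, ¬ R.conf a b := fun a ha b hb =>
    hcf a (Or.inl ha) b (Or.inl hb)
  intro e he
  have heF := hB' he
  have he_committed : e ∉ S.committed A := by
    rintro (⟨-, heF'⟩ | ⟨-, z, hz, hez⟩)
    · exact heF' heF
    · have hze : R.prev z e := (hcr e z (hS.lt e z hez)).2 (hS.F_subset heF)
      exact hprev e he z hze (Or.inl (hD (Or.inl hz)))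
  refine ⟨⟨heF, hS.F_subset_carrier heF, ?_⟩, ?_⟩
  · rintro (he' | ⟨-, a, ha, hea⟩)
    · exact he_committed he'
    · exact hDcf e (hB'D he) a (hD ha) (hS.conf e a hea)
  · rintro (⟨-, a, ⟨-, b, hb, hab⟩, hae⟩ | ⟨-, a, ha, hae⟩)
    · exact hDcf a (hrc e he a (hS.rc a e hae)).1 b (hD hb) (hS.conf a b hab)
    · exact hprev e he a (hS.prev a e hae) (Or.inl (hD ha))

lemma IsTraceFrom.stepsWithin_residStep (hcr : R.CauseRespecting) (hS : S.IsRestrictionOf R)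
    {p : Set E × Set E} {t : List (Set E × Set E)} {C C' : Set E}
    (htr : R.IsTraceFrom C (p :: t) C') (ht : S.StepsWithin (p :: t)) :
    (S.residStep p.1 p.2).StepsWithin t := by
  obtain ⟨hen, htr⟩ := htr
  have ht' : S.StepsWithin t := fun q hq => ht q (List.mem_cons_of_mem p hq)
  intro q hq
  obtain ⟨D, hD, henD⟩ := htr.exists_enabled_superset (hen.committed_subset hS)
    (committed_persistent hcr hS ht') q hq
  exact ⟨henD.subset_residStep_carrier hS hD (ht' q hq).1,
    henD.subset_residStep_F hS hD hcr (ht' q hq).2⟩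

lemma IsTraceFrom.get_subset_resid_take (hcr : R.CauseRespecting) {t : List (Set E × Set E)}
    {C C' : Set E} (htr : R.IsTraceFrom C t C') (hS : S.IsRestrictionOf R)
    (ht : S.StepsWithin t) (i : ℕ) (hi : i < t.length) :
    (t.get ⟨i, hi⟩).2 ⊆ (S.resid (t.take i)).F ∧
      (t.get ⟨i, hi⟩).1 ⊆ (S.resid (t.take i)).carrier := by
  induction t generalizing C S i with
  | nil => exact absurd hi (Nat.not_lt_zero i)
  | cons p rest ih =>
    cases i with
    | zero => exact (ht p List.mem_cons_self).symm
    | succ j =>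
      exact ih htr.2 (hS.residStep p.1 p.2) (htr.stepsWithin_residStep hcr hS ht) j
        (Nat.succ_lt_succ_iff.mp hi)

end RPESData

/-- For a cause-respecting RPES and a trace `t`, each reversed set
`Bᵢ` is still reversible in the preceding residual (`Bᵢ ⊆ F^{i-1}`), and each
executed set `Aᵢ` is still present (`Aᵢ ⊆ E^{i-1}`). -/
theorem trace_steps_in_resid {E L : Type} (R : RPESData E L) (h : R.IsRPES)
    (hcr : R.CauseRespecting) (t : List (Set E × Set E)) (ht : R.IsTrace t)
    (i : ℕ) (hi : i < t.length) :
    (t.get ⟨i, hi⟩).2 ⊆ (R.resid (t.take i)).F ∧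
    (t.get ⟨i, hi⟩).1 ⊆ (R.resid (t.take i)).carrier := by
  obtain ⟨C, htr⟩ := ht
  exact htr.get_subset_resid_take hcr (.refl h) htr.stepsWithin i hi
end
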